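/- arXiv:1712.00780 — 2 statements merged into one kernel-verified Lean document; each statement's English description precedes it below -/
import Mathlib

section
/- Let σ : D → ℤ be continuous. If σ is supported on a finite nonempty subtree X₁ of T containing the identity e and also supported on a finite nonempty subtree X₂ of T containing e, then σ is supported on the subtree X₁ ∩ X₂ (which is a nonempty subtree of T since both contain e). -/
open scoped BigOperators

namespace DecompPaper

variable (B : Type) [DecidableEq B]

/-- The set of letters `B ⊔ B⁻¹` carries the discrete topology. -/
instance : TopologicalSpace (B × Bool) := ⊥

/-- The Gromov boundary `∂F` of the free group on `B`: the space of infinite reduced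
words, i.e. sequences of letters with no cancelling adjacent pair, topologized as a
subspace of the product of discrete spaces. -/
abbrev Boundary : Type :=
  {s : ℕ → B × Bool // ∀ k, s (k + 1) ≠ ((s k).1, !(s k).2)}

/-- The prefix of length `m` of an infinite reduced word, as an element of the free group. -/
def prefixOf (ξ : Boundary B) (m : ℕ) : FreeGroup B :=
  FreeGroup.mk (List.ofFn fun i : Fin m => ξ.1 i)

/-- Adjacency in the Cayley graph `T` of the free group with respect to `B`. -/
def Adj (g h : FreeGroup B) : Prop :=
  ∃ x : B × Bool, h = g * FreeGroup.mk [x]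

/-- A set of vertices of `T` is a subtree iff any two of its vertices are joined by a
path in the Cayley graph staying inside the set. -/
def IsSubtree (X : Set (FreeGroup B)) : Prop :=
  ∀ g ∈ X, ∀ h ∈ X, Relation.ReflTransGen (fun a b => Adj B a b ∧ b ∈ X) g h

/-- `C` is a connected component of `T ∖ X`. -/
def IsComponentOf (X C : Set (FreeGroup B)) : Prop :=
  ∃ v, v ∉ X ∧
    C = {u | Relation.ReflTransGen (fun a b => Adj B a b ∧ a ∉ X ∧ b ∉ X) v u}

/-- `∂C`: the set of boundary points all of whose sufficiently long prefixes lie in `C`. -/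
def boundaryOf (C : Set (FreeGroup B)) : Set (Boundary B) :=
  {ξ | ∃ m, ∀ k, m ≤ k → prefixOf B ξ k ∈ C}

/-- The sequence `a` of group elements converges to the boundary point `ξ`:
every prefix of `ξ` is eventually an initial segment of the reduced word of `a k`. -/
def TendstoBoundary (a : ℕ → FreeGroup B) (ξ : Boundary B) : Prop :=
  ∀ m : ℕ, ∃ K, ∀ k, K ≤ k → (List.ofFn fun i : Fin m => ξ.1 i) <+: (a k).toWord

/-- `{ξ, η}` is a line of the line pattern generated by the words `w i`: for some
`g` and `i`, `ξ` and `η` are the limits of `g * (w i) ^ k` as `k → +∞` and `k → -∞`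
(in one of the two orders). -/
def IsLine {r : ℕ} (w : Fin r → FreeGroup B) (ξ η : Boundary B) : Prop :=
  ∃ (g : FreeGroup B) (i : Fin r),
    (TendstoBoundary B (fun k => g * w i ^ k) ξ ∧
       TendstoBoundary B (fun k => g * (w i)⁻¹ ^ k) η) ∨
    (TendstoBoundary B (fun k => g * w i ^ k) η ∧
       TendstoBoundary B (fun k => g * (w i)⁻¹ ^ k) ξ)

/-- Malnormality of the family of cyclic subgroups `⟨w i⟩`. -/
def Malnormal {r : ℕ} (w : Fin r → FreeGroup B) : Prop :=
  ∀ (g : FreeGroup B) (i j : Fin r),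
    (∃ x : FreeGroup B, x ∈ Subgroup.zpowers (w i) ∧ x ≠ 1 ∧
        g * x * g⁻¹ ∈ Subgroup.zpowers (w j)) →
      i = j ∧ g ∈ Subgroup.zpowers (w i)

/-- The decomposition space `D`: the quotient of `∂F` by the smallest equivalence
relation identifying the two endpoints of each line, with the quotient topology. -/
abbrev DSpace {r : ℕ} (w : Fin r → FreeGroup B) : Type :=
  Quot (IsLine B w)

/-- The quotient projection `q : ∂F → D`. -/
def qmap {r : ℕ} (w : Fin r → FreeGroup B) : Boundary B → DSpace B w :=
  Quot.mk _

/-- The geodesic of the line with endpoints `ξ` and `η`: all prefixes of `ξ` or of `η`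
of length at least the length of their longest common initial segment. -/
def lineGeodesic (ξ η : Boundary B) : Set (FreeGroup B) :=
  {g | ∃ k : ℕ, (g = prefixOf B ξ k ∨ g = prefixOf B η k) ∧ ∃ i ≤ k, ξ.1 i ≠ η.1 i}

/-- The line with endpoints `ξ, η` passes through the subtree `X`. -/
def PassesThrough (ξ η : Boundary B) (X : Set (FreeGroup B)) : Prop :=
  ∃ g ∈ X, g ∈ lineGeodesic B ξ η

/-- A function `σ : D → ℤ` is supported on the subtree `X` if `σ ∘ q` is constant on
`∂C` for every connected component `C` of `T ∖ X`. -/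
def SupportedOn {r : ℕ} (w : Fin r → FreeGroup B) (σ : DSpace B w → ℤ)
    (X : Set (FreeGroup B)) : Prop :=
  ∀ C : Set (FreeGroup B), IsComponentOf B X C →
    ∀ ξ, ξ ∈ boundaryOf B C → ∀ η, η ∈ boundaryOf B C →
      σ (qmap B w ξ) = σ (qmap B w η)

/-- Prepending a letter to an infinite reduced word, cancelling if necessary. -/
def consB (x : B × Bool) (ξ : Boundary B) : Boundary B :=
  if h : ξ.1 0 = (x.1, !x.2) then
    ⟨fun k => ξ.1 (k + 1), fun k => ξ.2 (k + 1)⟩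
  else
    ⟨fun k => Nat.rec x (fun j _ => ξ.1 j) k, by
      intro k
      cases k with
      | zero => exact h
      | succ j => exact ξ.2 j⟩

/-- The action of the free group on its boundary: left multiplication followed by
reduction. -/
def actB (g : FreeGroup B) (ξ : Boundary B) : Boundary B :=
  g.toWord.foldr (consB B) ξ

/-- The induced action of the free group on the decomposition space. -/
noncomputable def actD {r : ℕ} (w : Fin r → FreeGroup B) (g : FreeGroup B)
    (x : DSpace B w) : DSpace B w :=
  qmap B w (actB B g (Quot.out x))

/-- The map `p : (ℤ[F])^k → C(D, ℤ)` of right `ℤ[F]`-modules determined by generators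
`σ j`, where an element of the free module `(ℤ[F])^k` is recorded as a finitely
supported function `(Fin k × F) →₀ ℤ` and `e_j · g` is sent to `σ j · g`. -/
noncomputable def pMap {r : ℕ} (w : Fin r → FreeGroup B) {k : ℕ}
    (σ : Fin k → DSpace B w → ℤ) (x : (Fin k × FreeGroup B) →₀ ℤ) :
    DSpace B w → ℤ :=
  fun d => x.sum fun p n => n * σ p.1 (actD B w p.2 d)

/-- Right translation by `g` on the free module `(ℤ[F])^k`, sending `e_j · h` to
`e_j · (h * g)`. -/
noncomputable def fsTranslate {k : ℕ} (y : (Fin k × FreeGroup B) →₀ ℤ)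
    (g : FreeGroup B) : (Fin k × FreeGroup B) →₀ ℤ :=
  Finsupp.mapDomain (fun p => (p.1, p.2 * g)) y

/-- The convex hull of a set of vertices of `T`: the smallest subtree containing it. -/
def hull (S : Set (FreeGroup B)) : Set (FreeGroup B) :=
  ⋂₀ {Y : Set (FreeGroup B) | IsSubtree B Y ∧ S ⊆ Y}

/-- The support of an element of the free module `(ℤ[F])^k`, relative to supports
`X j` of the generators: the convex hull of the union of the sets `g⁻¹ • X j` over
the pairs `(j, g)` appearing with nonzero coefficient. -/
def fsSupport {k : ℕ} (X : Fin k → Set (FreeGroup B))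
    (x : (Fin k × FreeGroup B) →₀ ℤ) : Set (FreeGroup B) :=
  hull B (⋃ p ∈ x.support, (fun v => p.2⁻¹ * v) '' X p.1)

/-- Antisymmetry of a `1`-cochain on oriented lines. -/
def Antisym {r : ℕ} (w : Fin r → FreeGroup B)
    (f : Boundary B → Boundary B → ℤ) : Prop :=
  ∀ ξ η, IsLine B w ξ η → f η ξ = -f ξ η

/-- A `1`-cochain is supported on the subtree `X`: it vanishes on lines not passing
through `X`, and depends only on the pair of components of `T ∖ X` containing the two
endpoints. -/
def SupportedOn1 {r : ℕ} (w : Fin r → FreeGroup B)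
    (f : Boundary B → Boundary B → ℤ) (X : Set (FreeGroup B)) : Prop :=
  (∀ ξ η, IsLine B w ξ η → ¬PassesThrough B ξ η X → f ξ η = 0) ∧
  (∀ C C' : Set (FreeGroup B), IsComponentOf B X C → IsComponentOf B X C' → C ≠ C' →
    ∀ ξ ξ' η η', IsLine B w ξ η → IsLine B w ξ' η' →
      ξ ∈ boundaryOf B C → ξ' ∈ boundaryOf B C →
      η ∈ boundaryOf B C' → η' ∈ boundaryOf B C' →
      f ξ η = f ξ' η')

/-- Membership in `C¹`: an antisymmetric integer-valued function on oriented lines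
supported on at least one finite nonempty subtree of `T`. -/
def MemC1 {r : ℕ} (w : Fin r → FreeGroup B)
    (f : Boundary B → Boundary B → ℤ) : Prop :=
  Antisym B w f ∧
    ∃ X : Set (FreeGroup B), X.Finite ∧ X.Nonempty ∧ IsSubtree B X ∧
      SupportedOn1 B w f X

/-- The ball of radius `R` about a set `Y` of vertices of `T` (word metric). -/
def ballAbout (Y : Set (FreeGroup B)) (R : ℕ) : Set (FreeGroup B) :=
  {g | ∃ y ∈ Y, (y⁻¹ * g).toWord.length ≤ R}

/-- The map `p : (ℤ[F])^k → C¹` of right `ℤ[F]`-modules determined by generators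
`f j`, sending `e_j · g` to `f j · g`. -/
noncomputable def pC1 {k : ℕ} (f : Fin k → Boundary B → Boundary B → ℤ)
    (x : (Fin k × FreeGroup B) →₀ ℤ) : Boundary B → Boundary B → ℤ :=
  fun ξ η => x.sum fun p n => n * f p.1 (actB B p.2 ξ) (actB B p.2 η)

/-- `σ : ∂F → ℤ` is constant on `∂C` for every connected component `C` of `T ∖ X`. -/
def ConstOnComponents (X : Set (FreeGroup B)) (σ : Boundary B → ℤ) : Prop :=
  ∀ C : Set (FreeGroup B), IsComponentOf B X C →
    ∀ ξ, ξ ∈ boundaryOf B C → ∀ η, η ∈ boundaryOf B C → σ ξ = σ η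

/-- The shadow `S(g) ⊆ ∂F` of a nontrivial group element `g`: the boundary points
having the reduced word of `g` as an initial segment. -/
def shadow (g : FreeGroup B) : Set (Boundary B) :=
  {ξ | prefixOf B ξ g.toWord.length = g}

end DecompPaper

open DecompPaper

/-! If `X ∋ e` is a subtree, every vertex `u ∉ X` has its whole cone outside `X`, so a function
constant on `∂C` for the components `C` of `T ∖ X` is constant on the shadow of each `u ∉ X`.
Constancy on the shadows of all vertices outside `Y` is obviously inherited by `X₁ ∩ X₂` from
`X₁` and `X₂`, and it implies constancy on `∂C` for each component `C` of `T ∖ Y`: the shadows of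
adjacent vertices are nested and nonempty, so the constant value propagates along paths in `C`. -/

namespace DecompPaper

open FreeGroup

variable {B : Type}

lemma ne_inv_letter_iff {a b : B × Bool} : b ≠ (a.1, !a.2) ↔ (a.1 = b.1 → a.2 = b.2) := by
  obtain ⟨a₁, a₂⟩ := a
  obtain ⟨b₁, b₂⟩ := b
  cases a₂ <;> cases b₂ <;> simp [eq_comm]

lemma mk_inv_letter (x : B × Bool) : mk [(x.1, !x.2)] = (mk [x])⁻¹ := by
  simp [inv_mk, invRev]

lemma Adj.symm {g h : FreeGroup B} (hgh : Adj B g h) : Adj B h g := by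
  obtain ⟨x, rfl⟩ := hgh
  exact ⟨(x.1, !x.2), by rw [mk_inv_letter, mul_inv_cancel_right]⟩

lemma Adj.toWord_eq_append_or [DecidableEq B] {g h : FreeGroup B} (hgh : Adj B g h) :
    (∃ x, h.toWord = g.toWord ++ [x]) ∨ ∃ x, g.toWord = h.toWord ++ [x] := by
  obtain ⟨x, rfl⟩ := hgh
  have hmul : g * mk [x] = mk (g.toWord ++ [x]) := by rw [← mul_mk, mk_toWord]
  obtain hnil | ⟨L, a, hL⟩ := g.toWord.eq_nil_or_concat'
  · exact .inl ⟨x, by rw [hmul, hnil, toWord_mk]; rfl⟩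
  have hgred : IsReduced (L ++ [a]) := hL ▸ isReduced_toWord
  by_cases ha : a = (x.1, !x.2)
  · have hcancel : g * mk [x] = mk L := by
      rw [← mk_toWord (x := g), hL, ← mul_mk, ha, mk_inv_letter, inv_mul_cancel_right]
    refine .inr ⟨a, ?_⟩
    rw [hcancel, toWord_mk, (hgred.infix (List.prefix_append _ _).isInfix).reduce_eq, hL]
  · have hax : IsReduced [a, x] :=
      isReduced_cons_cons.mpr ⟨ne_inv_letter_iff.mp fun h => ha (by subst h; simp), .singleton⟩
    have hred : IsReduced (L ++ [a] ++ [x]) := hgred.append_overlap hax (List.cons_ne_nil _ _)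
    exact .inl ⟨x, by rw [hmul, toWord_mk, hL, hred.reduce_eq]⟩

lemma adj_prefixOf_succ (ξ : Boundary B) (k : ℕ) :
    Adj B (prefixOf B ξ k) (prefixOf B ξ (k + 1)) := by
  refine ⟨ξ.1 k, ?_⟩
  rw [prefixOf, prefixOf, mul_mk, List.ofFn_succ', List.concat_eq_append]
  rfl

variable [DecidableEq B] {X : Set (FreeGroup B)}

lemma IsSubtree.mk_mem_of_prefix (hX : IsSubtree B X) (he : 1 ∈ X) {u : FreeGroup B}
    (hu : u ∈ X) {p : List (B × Bool)} (hp : p <+: u.toWord) : mk p ∈ X := by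
  have path := hX 1 he u hu
  clear hu
  induction path generalizing p with
  | refl =>
    rw [toWord_one, List.prefix_nil] at hp
    rwa [hp, ← one_eq_mk]
  | @tail b c _ hbc ih =>
    obtain ⟨hadj, hc⟩ := hbc
    rcases hadj.toWord_eq_append_or with ⟨x, hx⟩ | ⟨x, hx⟩
    · rcases List.prefix_concat_iff.mp (hx ▸ hp) with rfl | hp
      · rwa [← hx, mk_toWord]
      · exact ih hp
    · exact ih (hp.trans (hx ▸ List.prefix_append _ _))

lemma IsSubtree.not_mem_of_prefix (hX : IsSubtree B X) (he : 1 ∈ X) {u v : FreeGroup B}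
    (hu : u ∉ X) (huv : u.toWord <+: v.toWord) : v ∉ X :=
  fun hv => hu (mk_toWord (x := u) ▸ hX.mk_mem_of_prefix he hv huv)

lemma prefixOf_toWord (ξ : Boundary B) (m : ℕ) :
    (prefixOf B ξ m).toWord = List.ofFn fun i : Fin m => ξ.1 i := by
  refine IsReduced.reduce_eq (List.isChain_ofFn.mpr fun i _ => ?_)
  exact ne_inv_letter_iff.mp (ξ.2 i)

lemma prefixOf_toWord_prefix (ξ : Boundary B) {m k : ℕ} (hmk : m ≤ k) :
    (prefixOf B ξ m).toWord <+: (prefixOf B ξ k).toWord := by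
  rw [prefixOf_toWord, prefixOf_toWord, List.prefix_iff_eq_take]
  apply List.ext_getElem <;> simp [hmk]

lemma mem_shadow_prefixOf (ξ : Boundary B) (m : ℕ) : ξ ∈ shadow B (prefixOf B ξ m) := by
  show prefixOf B ξ _ = _
  rw [prefixOf_toWord, List.length_ofFn]

lemma shadow_subset_shadow {u v : FreeGroup B} (huv : u.toWord <+: v.toWord) :
    shadow B v ⊆ shadow B u := by
  intro ξ hξ
  have hpre := prefixOf_toWord_prefix ξ huv.length_le
  rw [show prefixOf B ξ v.toWord.length = v from hξ] at hpre
  have hlen : (prefixOf B ξ u.toWord.length).toWord.length = u.toWord.length := by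
    simp [prefixOf_toWord]
  exact toWord_injective
    ((List.prefix_of_prefix_length_le hpre huv hlen.le).eq_of_length hlen)

lemma shadow_nonempty {u : FreeGroup B} (hu : u ≠ 1) : (shadow B u).Nonempty := by
  have hne : u.toWord ≠ [] := mt toWord_eq_nil_iff.mp hu
  set a := u.toWord.getLast hne with ha
  have hred : ∀ k, u.toWord.getD (k + 1) a ≠ ((u.toWord.getD k a).1, !(u.toWord.getD k a).2) := by
    intro k
    rw [ne_inv_letter_iff]
    rcases lt_or_ge (k + 1) u.toWord.length with hk | hk
    · rw [List.getD_eq_getElem _ _ hk, List.getD_eq_getElem _ _ (by omega)]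
      exact List.isChain_iff_getElem.mp isReduced_toWord k hk
    · rw [List.getD_eq_default _ _ hk]
      rcases lt_or_ge k u.toWord.length with hk' | hk'
      · rw [List.getD_eq_getElem _ _ hk', ha, List.getLast_eq_getElem hne]
        simp [show k = u.toWord.length - 1 by omega]
      · rw [List.getD_eq_default _ _ hk']
        simp
  refine ⟨⟨fun k => u.toWord.getD k a, hred⟩, ?_⟩
  show mk _ = u
  conv_rhs => rw [← mk_toWord (x := u)]
  congr 1
  apply List.ext_getElem <;> simp

lemma IsSubtree.shadow_subset_boundaryOf (hX : IsSubtree B X) (he : 1 ∈ X) {u : FreeGroup B}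
    (hu : u ∉ X) :
    shadow B u ⊆ boundaryOf B {v | Relation.ReflTransGen
      (fun a b => Adj B a b ∧ a ∉ X ∧ b ∉ X) u v} := by
  intro ξ hξ
  have hout : ∀ k, u.toWord.length ≤ k → prefixOf B ξ k ∉ X := fun k hk =>
    hX.not_mem_of_prefix he hu (hξ ▸ prefixOf_toWord_prefix ξ hk)
  refine ⟨u.toWord.length, fun k hk => ?_⟩
  induction k, hk using Nat.le_induction with
  | base => rw [show prefixOf B ξ _ = u from hξ]; exact .refl
  | succ k hk ih => exact ih.tail ⟨adj_prefixOf_succ ξ k, hout k hk, hout (k + 1) (by omega)⟩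

def ConstOnShadows (Y : Set (FreeGroup B)) (f : Boundary B → ℤ) : Prop :=
  ∀ u ∉ Y, ∀ ξ ∈ shadow B u, ∀ η ∈ shadow B u, f ξ = f η

variable {f : Boundary B → ℤ}

lemma ConstOnComponents.constOnShadows (hX : IsSubtree B X) (he : 1 ∈ X)
    (hf : ConstOnComponents B X f) : ConstOnShadows X f :=
  fun u hu ξ hξ η hη => hf _ ⟨u, hu, rfl⟩ ξ (hX.shadow_subset_boundaryOf he hu hξ)
    η (hX.shadow_subset_boundaryOf he hu hη)

lemma ConstOnShadows.inter {X₁ X₂ : Set (FreeGroup B)} (h₁ : ConstOnShadows X₁ f)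
    (h₂ : ConstOnShadows X₂ f) : ConstOnShadows (X₁ ∩ X₂) f := by
  intro u hu
  rcases not_and_or.mp hu with hu | hu
  exacts [h₁ u hu, h₂ u hu]

lemma ConstOnShadows.forall_shadow_of_adj {Y : Set (FreeGroup B)} (hf : ConstOnShadows Y f)
    {b c : FreeGroup B} (hbc : Adj B b c) (hc : c ∉ Y) {ξ : Boundary B}
    (hb : ∀ ζ ∈ shadow B b, f ζ = f ξ) : ∀ ζ ∈ shadow B c, f ζ = f ξ := by
  intro ζ hζ
  rcases hbc.toWord_eq_append_or with ⟨x, hx⟩ | ⟨x, hx⟩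
  · exact hb ζ (shadow_subset_shadow (hx ▸ List.prefix_append _ _) hζ)
  · have hb1 : b ≠ 1 := fun h => by simp [h] at hx
    obtain ⟨ζ₀, hζ₀⟩ := shadow_nonempty hb1
    rw [hf c hc ζ hζ ζ₀ (shadow_subset_shadow (hx ▸ List.prefix_append _ _) hζ₀), hb ζ₀ hζ₀]

lemma ConstOnShadows.constOnComponents {Y : Set (FreeGroup B)} (hf : ConstOnShadows Y f) :
    ConstOnComponents B Y f := by
  rintro _ ⟨v, hv, rfl⟩ ξ ⟨m, hm⟩ η ⟨n, hn⟩
  set R : FreeGroup B → FreeGroup B → Prop := fun a b => Adj B a b ∧ a ∉ Y ∧ b ∉ Y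
  have hξY : prefixOf B ξ m ∉ Y := by
    rcases (hm m le_rfl).cases_tail with h | ⟨_, _, hstep⟩
    exacts [h ▸ hv, hstep.2.2]
  have path : Relation.ReflTransGen R (prefixOf B ξ m) (prefixOf B η n) :=
    Relation.ReflTransGen.trans
      (Relation.ReflTransGen.mono (r := Function.swap R) (fun _ _ h => ⟨h.1.symm, h.2.2, h.2.1⟩)
        _ _ (Relation.ReflTransGen.swap _ _ (hm m le_rfl)))
      (hn n le_rfl)
  suffices ∀ u, Relation.ReflTransGen R (prefixOf B ξ m) u → ∀ ζ ∈ shadow B u, f ζ = f ξ from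
    (this _ path η (mem_shadow_prefixOf η n)).symm
  intro u hu
  induction hu with
  | refl => exact fun ζ hζ => hf _ hξY ζ hζ ξ (mem_shadow_prefixOf ξ m)
  | tail _ hbc ih => exact hf.forall_shadow_of_adj hbc.1 hbc.2.2 ih

end DecompPaper

theorem supported_on_intersection_general
    (B : Type) [DecidableEq B]
    (r : ℕ) (w : Fin r → FreeGroup B)
    (σ : DSpace B w → ℤ)
    (X₁ X₂ : Set (FreeGroup B))
    (h₁tree : IsSubtree B X₁)
    (h₁e : (1 : FreeGroup B) ∈ X₁)
    (h₂tree : IsSubtree B X₂)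
    (h₂e : (1 : FreeGroup B) ∈ X₂)
    (h₁ : SupportedOn B w σ X₁) (h₂ : SupportedOn B w σ X₂) :
    SupportedOn B w σ (X₁ ∩ X₂) := by
  show ConstOnComponents B (X₁ ∩ X₂) fun ξ => σ (qmap B w ξ)
  exact ((ConstOnComponents.constOnShadows h₁tree h₁e h₁).inter
    (ConstOnComponents.constOnShadows h₂tree h₂e h₂)).constOnComponents

/-- Lemma `intersections`: if a continuous `σ : D → ℤ` is supported
on finite nonempty subtrees `X₁` and `X₂` of `T`, both containing `e`, then it is
supported on `X₁ ∩ X₂`. -/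
theorem supported_on_intersection
    (B : Type) [Fintype B] [DecidableEq B] (hB : 2 ≤ Fintype.card B)
    (r : ℕ) (w : Fin r → FreeGroup B) (hw : ∀ i, w i ≠ 1) (hmal : Malnormal B w)
    (σ : DSpace B w → ℤ) (hσ : Continuous σ)
    (X₁ X₂ : Set (FreeGroup B))
    (h₁fin : X₁.Finite) (h₁ne : X₁.Nonempty) (h₁tree : IsSubtree B X₁)
    (h₁e : (1 : FreeGroup B) ∈ X₁)
    (h₂fin : X₂.Finite) (h₂ne : X₂.Nonempty) (h₂tree : IsSubtree B X₂)
    (h₂e : (1 : FreeGroup B) ∈ X₂)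
    (h₁ : SupportedOn B w σ X₁) (h₂ : SupportedOn B w σ X₂) :
    SupportedOn B w σ (X₁ ∩ X₂) :=
  supported_on_intersection_general B r w σ X₁ X₂ h₁tree h₁e h₂tree h₂e h₁ h₂
end

section
/- The submodule B¹ of C¹ is generated as a right ℤ[F]-module by the set of elements dσ where σ : ∂F → ℤ is continuous and constant on ∂C for every connected component C of T ∖ {e} (the subtree consisting of the single identity vertex e). -/
open scoped BigOperators

/-!
Since `∂F` is compact and `ℤ` is discrete, a continuous `σ : ∂F → ℤ` depends only on the first
`N` letters for some uniform `N`, so `σ` is a finite integer combination of indicators of the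
cylinders of reduced words `u x` of length `N + 1`. Translating by `u⁻¹` turns the cylinder of
`u x` into the set of boundary points whose first letter is `x`, and the first letter is constant
on `∂C` for every component `C` of `T ∖ {e}`. Thus `σ` itself, and not only `dσ`, is a combination
of translates of first-letter indicators.
-/

namespace FreeGroup

variable {α : Type*}

theorem ne_inverse_letter_iff {a b : α × Bool} : b ≠ (a.1, !a.2) ↔ (a.1 = b.1 → a.2 = b.2) := by
  obtain ⟨a₁, a₂⟩ := a
  obtain ⟨b₁, b₂⟩ := b
  cases a₂ <;> cases b₂ <;> simp [eq_comm]

variable [DecidableEq α]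

theorem toWord_mul_mk_singleton (g : FreeGroup α) (x : α × Bool) :
    (g * mk [x]).toWord = g.toWord ++ [x] ∨
      g.toWord = (g * mk [x]).toWord ++ [(x.1, !x.2)] := by
  by_cases hlast : g.toWord.getLast? = some (x.1, !x.2)
  · obtain ⟨l, hl⟩ := List.getLast?_eq_some_iff.mp hlast
    have hmul : g * mk [x] = mk l := by
      have hinv : mk [(x.1, !x.2)] = (mk [x])⁻¹ := by simp [inv_mk, invRev]
      rw [← mk_toWord (x := g), hl, ← mul_mk, hinv, inv_mul_cancel_right]
    have hred : IsReduced l := by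
      have h := isReduced_toWord (x := g)
      rw [hl] at h
      exact h.infix (List.prefix_append _ _).isInfix
    right
    rw [hmul, toWord_mk, hred.reduce_eq, hl]
  · have hred : IsReduced (g.toWord ++ [x]) := by
      refine List.isChain_append.mpr ⟨isReduced_toWord, List.isChain_singleton x, ?_⟩
      rintro y hy _ ⟨⟩
      exact ne_inverse_letter_iff.mp fun h => hlast (by rw [h]; simpa using hy)
    left
    rw [toWord_mul, toWord_mk, reduce_singleton, hred.reduce_eq]

theorem toWord_head?_mul_mk_singleton {g : FreeGroup α} {x : α × Bool} (hg : g ≠ 1)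
    (hgx : g * mk [x] ≠ 1) : (g * mk [x]).toWord.head? = g.toWord.head? := by
  rcases toWord_mul_mk_singleton g x with h | h
  · rw [h, List.head?_append_of_ne_nil _ (toWord_eq_nil_iff.not.mpr hg)]
  · rw [h, List.head?_append_of_ne_nil _ (toWord_eq_nil_iff.not.mpr hgx)]

end FreeGroup

theorem PiNat.exists_cylinder_factor {E : ℕ → Type*} [∀ n, TopologicalSpace (E n)]
    [∀ n, DiscreteTopology (E n)] {X Y : Type*} [TopologicalSpace X] [CompactSpace X]
    [TopologicalSpace Y] [DiscreteTopology Y] {f : X → ∀ n, E n} (hf : Topology.IsInducing f)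
    {σ : X → Y} (hσ : Continuous σ) :
    ∃ N, ∀ x y, f y ∈ PiNat.cylinder (f x) N → σ y = σ x := by
  let U : ℕ → Set X := fun N => {x | ∀ y, f y ∈ PiNat.cylinder (f x) N → σ y = σ x}
  have hU_open : ∀ N, IsOpen (U N) := by
    refine fun N => isOpen_iff_forall_mem_open.mpr fun x hx => ?_
    refine ⟨f ⁻¹' PiNat.cylinder (f x) N, fun y hy z hz => ?_,
      (PiNat.isOpen_cylinder E _ N).preimage hf.continuous, PiNat.self_mem_cylinder _ _⟩
    rw [PiNat.mem_cylinder_iff_eq.mp hy] at hz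
    exact (hx z hz).trans (hx y hy).symm
  have hU_mono : Monotone U := fun M N hMN x hx y hy =>
    hx y (PiNat.cylinder_anti _ hMN hy)
  have hU_cover : Set.univ ⊆ ⋃ N, U N := by
    intro x _
    obtain ⟨V, hV, hVσ⟩ := hf.isOpen_iff.mp ((isOpen_discrete {σ x}).preimage hσ)
    have hxV : x ∈ f ⁻¹' V := by rw [hVσ]; rfl
    obtain ⟨_, ⟨z, N, rfl⟩, hxz, hzV⟩ :=
      (PiNat.isTopologicalBasis_cylinders E).exists_subset_of_mem_open hxV hV
    refine Set.mem_iUnion.mpr ⟨N, fun y hy => ?_⟩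
    rw [PiNat.mem_cylinder_iff_eq.mp hxz] at hy
    have hy' : y ∈ f ⁻¹' V := hzV hy
    rwa [hVσ] at hy'
  obtain ⟨N, hN⟩ := isCompact_univ.elim_directed_cover U hU_open hU_cover hU_mono.directed_le
  exact ⟨N, fun x => hN (Set.mem_univ x)⟩

namespace DecompPaper

open FreeGroup

variable {B : Type}

def StartsWith (s : ℕ → B × Bool) (l : List (B × Bool)) : Prop :=
  ∀ i (h : i < l.length), s i = l[i]

theorem startsWith_nil (s : ℕ → B × Bool) : StartsWith s [] := fun _ h => absurd h (by simp)

theorem startsWith_cons {s : ℕ → B × Bool} {a : B × Bool} {l : List (B × Bool)} :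
    StartsWith s (a :: l) ↔ s 0 = a ∧ StartsWith (fun k => s (k + 1)) l := by
  refine ⟨fun h => ⟨h 0 (by simp), fun i hi => h (i + 1) (by simpa using hi)⟩, ?_⟩
  rintro ⟨h₀, h⟩ (_ | i) hi
  · exact h₀
  · exact h i (by simpa using hi)

theorem startsWith_append_singleton {s : ℕ → B × Bool} {l : List (B × Bool)} {x : B × Bool} :
    StartsWith s (l ++ [x]) ↔ StartsWith s l ∧ s l.length = x := by
  refine ⟨fun h => ⟨fun i hi => ?_, by simpa using h l.length (by simp)⟩, ?_⟩
  · have hi' := h i (by simp; omega)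
    rwa [List.getElem_append_left hi] at hi'
  · rintro ⟨h, hx⟩ i hi
    rcases Nat.lt_or_ge i l.length with hil | hil
    · simpa [List.getElem_append_left hil] using h i hil
    · obtain rfl : i = l.length := by simp at hi; omega
      simpa using hx

theorem startsWith_ofFn_iff {s : ℕ → B × Bool} {N : ℕ} {u : Fin N → B × Bool} :
    StartsWith s (List.ofFn u) ↔ (fun i : Fin N => s i) = u := by
  simp only [StartsWith, List.length_ofFn, List.getElem_ofFn, funext_iff, Fin.forall_iff]

theorem StartsWith.mem_cylinder {s t : ℕ → B × Bool} {l : List (B × Bool)}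
    (hs : StartsWith s l) (ht : StartsWith t l) : s ∈ PiNat.cylinder t l.length :=
  fun i hi => (hs i hi).trans (ht i hi).symm

theorem Boundary.isReduced_of_startsWith {ξ : Boundary B} {l : List (B × Bool)}
    (h : StartsWith ξ.1 l) : IsReduced l := by
  refine List.isChain_iff_getElem.mpr fun i hi => ?_
  rw [← h i (by omega), ← h (i + 1) hi]
  exact ne_inverse_letter_iff.mp (ξ.2 i)

instance : DiscreteTopology (B × Bool) := ⟨rfl⟩

instance [Finite B] : CompactSpace (Boundary B) := by
  refine (isCompact_iff_compactSpace
    (s := {s : ℕ → B × Bool | ∀ k, s (k + 1) ≠ ((s k).1, !(s k).2)})).mp (IsClosed.isCompact ?_)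
  rw [Set.ofPred_forall]
  refine isClosed_iInter fun k => ?_
  have hcont : Continuous fun s : ℕ → B × Bool => (s (k + 1), s k) :=
    (continuous_apply (k + 1)).prodMk (continuous_apply k)
  exact (isClosed_discrete {p : (B × Bool) × (B × Bool) | p.1 ≠ (p.2.1, !p.2.2)}).preimage hcont

variable [DecidableEq B]

theorem toWord_prefixOf (ξ : Boundary B) (n : ℕ) :
    (prefixOf B ξ n).toWord = List.ofFn fun i : Fin n => ξ.1 i := by
  have h : StartsWith ξ.1 (List.ofFn fun i : Fin n => ξ.1 i) := startsWith_ofFn_iff.mpr rfl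
  rw [prefixOf, toWord_mk, (Boundary.isReduced_of_startsWith h).reduce_eq]

theorem consB_val_of_eq {x : B × Bool} {ξ : Boundary B} (h : ξ.1 0 = (x.1, !x.2)) :
    (consB B x ξ).1 = fun k => ξ.1 (k + 1) := by
  rw [consB, dif_pos h]

theorem consB_val_zero_of_ne {x : B × Bool} {ξ : Boundary B} (h : ξ.1 0 ≠ (x.1, !x.2)) :
    (consB B x ξ).1 0 = x := by
  rw [consB, dif_neg h]
  rfl

theorem actB_inv_mk_nil (ξ : Boundary B) : actB B (mk [])⁻¹ ξ = ξ := by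
  simp [actB, ← one_eq_mk]

theorem actB_inv_mk_cons {a : B × Bool} {l : List (B × Bool)} (hl : IsReduced (a :: l))
    (ξ : Boundary B) : actB B (mk (a :: l))⁻¹ ξ = actB B (mk l)⁻¹ (consB B (a.1, !a.2) ξ) := by
  have hl' : IsReduced l := hl.infix (List.suffix_cons a l).isInfix
  rw [actB, actB, toWord_inv, toWord_inv, toWord_mk, toWord_mk, hl.reduce_eq, hl'.reduce_eq,
    invRev_cons, List.foldr_append]
  rfl

theorem actB_inv_mk_val_of_startsWith {l : List (B × Bool)} (hl : IsReduced l)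
    {ξ : Boundary B} (h : StartsWith ξ.1 l) (k : ℕ) :
    (actB B (mk l)⁻¹ ξ).1 k = ξ.1 (k + l.length) := by
  induction l generalizing ξ with
  | nil => rw [actB_inv_mk_nil]; rfl
  | cons a l ih =>
    obtain ⟨h₀, h⟩ := startsWith_cons.mp h
    have hcancel := consB_val_of_eq (x := (a.1, !a.2)) (ξ := ξ) (by simp [h₀])
    rw [actB_inv_mk_cons hl, ih (hl.infix (List.suffix_cons a l).isInfix) (hcancel ▸ h), hcancel]
    rfl

theorem actB_inv_mk_val_zero_of_not_startsWith {l : List (B × Bool)} (hl : IsReduced l)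
    (hne : l ≠ []) {ξ : Boundary B} (h : ¬StartsWith ξ.1 l) :
    (actB B (mk l)⁻¹ ξ).1 0 = ((l.getLast hne).1, !(l.getLast hne).2) := by
  induction l generalizing ξ with
  | nil => exact absurd rfl hne
  | cons a l ih =>
    have hl' : IsReduced l := hl.infix (List.suffix_cons a l).isInfix
    rw [actB_inv_mk_cons hl]
    by_cases h₀ : ξ.1 0 = a
    · have hcancel := consB_val_of_eq (x := (a.1, !a.2)) (ξ := ξ) (by simp [h₀])
      have hl₀ : l ≠ [] := by
        rintro rfl
        exact h (startsWith_cons.mpr ⟨h₀, startsWith_nil _⟩)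
      rw [List.getLast_cons hl₀]
      refine ih hl' hl₀ fun hs => h (startsWith_cons.mpr ⟨h₀, ?_⟩)
      rwa [hcancel] at hs
    · have hhead := consB_val_zero_of_ne (x := (a.1, !a.2)) (ξ := ξ) (by simpa using h₀)
      cases l with
      | nil => rw [actB_inv_mk_nil, hhead, List.getLast_singleton]
      | cons b l =>
        rw [List.getLast_cons (List.cons_ne_nil b l)]
        refine ih hl' (List.cons_ne_nil b l) fun hs => ?_
        have hab := (isReduced_cons_cons.mp hl).1
        exact ne_inverse_letter_iff.mpr hab ((startsWith_cons.mp hs).1.symm.trans hhead)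

theorem actB_inv_mk_val_zero_eq_iff {l : List (B × Bool)} {x : B × Bool}
    (hl : IsReduced (l ++ [x])) (ξ : Boundary B) :
    (actB B (mk l)⁻¹ ξ).1 0 = x ↔ StartsWith ξ.1 (l ++ [x]) := by
  have hl' : IsReduced l := hl.infix (List.prefix_append l [x]).isInfix
  rw [startsWith_append_singleton]
  by_cases h : StartsWith ξ.1 l
  · rw [actB_inv_mk_val_of_startsWith hl' h, zero_add]
    exact ⟨fun hx => ⟨h, hx⟩, And.right⟩
  · have hne : l ≠ [] := by
      rintro rfl
      exact h (startsWith_nil _)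
    rw [actB_inv_mk_val_zero_of_not_startsWith hl' hne h]
    have hrel := (List.isChain_append.mp hl).2.2 _ (List.getLast?_eq_some_getLast hne) x rfl
    exact iff_of_false (ne_inverse_letter_iff.mpr hrel).symm fun h' => h h'.1

theorem toWord_head?_eq_of_mem_component {C : Set (FreeGroup B)} (hC : IsComponentOf B {1} C)
    {u v : FreeGroup B} (hu : u ∈ C) (hv : v ∈ C) : u.toWord.head? = v.toWord.head? := by
  obtain ⟨v₀, -, hC⟩ := hC
  suffices h : ∀ u ∈ C, u.toWord.head? = v₀.toWord.head? from (h u hu).trans (h v hv).symm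
  intro u hu
  rw [hC] at hu
  induction hu with
  | refl => rfl
  | tail _ hstep ih =>
    obtain ⟨⟨x, rfl⟩, ha, hb⟩ := hstep
    exact (toWord_head?_mul_mk_singleton ha hb).trans ih

theorem head_eq_of_mem_boundaryOf_component {C : Set (FreeGroup B)} (hC : IsComponentOf B {1} C)
    {ξ η : Boundary B} (hξ : ξ ∈ boundaryOf B C) (hη : η ∈ boundaryOf B C) : ξ.1 0 = η.1 0 := by
  obtain ⟨m, hm⟩ := hξ
  obtain ⟨n, hn⟩ := hη
  have h := toWord_head?_eq_of_mem_component hC (hm (m + 1) m.le_succ) (hn (n + 1) n.le_succ)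
  simpa [toWord_prefixOf, List.ofFn_succ] using h

def firstLetterIndicator (x : B × Bool) (ξ : Boundary B) : ℤ :=
  if ξ.1 0 = x then 1 else 0

theorem continuous_firstLetterIndicator (x : B × Bool) :
    Continuous (firstLetterIndicator x) :=
  show Continuous ((fun y : B × Bool => if y = x then (1 : ℤ) else 0) ∘ fun ξ : Boundary B => ξ.1 0)
  from continuous_of_discreteTopology.comp ((continuous_apply 0).comp continuous_subtype_val)

theorem constOnComponents_firstLetterIndicator (x : B × Bool) :
    ConstOnComponents B {1} (firstLetterIndicator x) := fun _ hC _ hξ _ hη => by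
  rw [firstLetterIndicator, firstLetterIndicator, head_eq_of_mem_boundaryOf_component hC hξ hη]

open Classical in
noncomputable def cylinderValue (σ : Boundary B → ℤ) (l : List (B × Bool)) : ℤ :=
  if h : ∃ ξ : Boundary B, StartsWith ξ.1 l then σ h.choose else 0

theorem sum_cylinderValue_mul_firstLetterIndicator [Fintype B] {σ : Boundary B → ℤ} {N : ℕ}
    (hσ : ∀ ξ η : Boundary B, η.1 ∈ PiNat.cylinder ξ.1 N → σ η = σ ξ) (ζ : Boundary B) :
    ∑ p : (Fin N → B × Bool) × (B × Bool),
        cylinderValue σ (List.ofFn p.1 ++ [p.2]) *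
          firstLetterIndicator p.2 (actB B (mk (List.ofFn p.1))⁻¹ ζ) = σ ζ := by
  classical
  have hterm : ∀ p : (Fin N → B × Bool) × (B × Bool),
      cylinderValue σ (List.ofFn p.1 ++ [p.2]) *
          firstLetterIndicator p.2 (actB B (mk (List.ofFn p.1))⁻¹ ζ) =
        if StartsWith ζ.1 (List.ofFn p.1 ++ [p.2]) then σ ζ else 0 := by
    intro p
    by_cases hζ : StartsWith ζ.1 (List.ofFn p.1 ++ [p.2])
    · have hne : ∃ ξ : Boundary B, StartsWith ξ.1 (List.ofFn p.1 ++ [p.2]) := ⟨ζ, hζ⟩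
      have hred := Boundary.isReduced_of_startsWith hζ
      rw [if_pos hζ, cylinderValue, dif_pos hne, firstLetterIndicator,
        if_pos ((actB_inv_mk_val_zero_eq_iff hred ζ).mpr hζ), mul_one]
      exact hσ _ _ (PiNat.cylinder_anti _ (by simp) (hne.choose_spec.mem_cylinder hζ))
    · rw [if_neg hζ]
      by_cases hne : ∃ ξ : Boundary B, StartsWith ξ.1 (List.ofFn p.1 ++ [p.2])
      · have hred := Boundary.isReduced_of_startsWith hne.choose_spec
        rw [firstLetterIndicator, if_neg (mt (actB_inv_mk_val_zero_eq_iff hred ζ).mp hζ), mul_zero]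
      · rw [cylinderValue, dif_neg hne, zero_mul]
  rw [Fintype.sum_eq_single (fun i : Fin N => ζ.1 i, ζ.1 N)]
  · rw [hterm, if_pos (startsWith_append_singleton.mpr ⟨startsWith_ofFn_iff.mpr rfl, by simp⟩)]
  · intro p hp
    rw [hterm, if_neg]
    intro h
    obtain ⟨h₁, h₂⟩ := startsWith_append_singleton.mp h
    exact hp (Prod.ext (startsWith_ofFn_iff.mp h₁).symm (by simpa using h₂.symm))

theorem exists_eq_sum_firstLetterIndicator_actB [Fintype B] {σ : Boundary B → ℤ}
    (hσ : Continuous σ) :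
    ∃ (m : ℕ) (c : Fin m → ℤ) (x : Fin m → B × Bool) (g : Fin m → FreeGroup B),
      ∀ ζ, σ ζ = ∑ i, c i * firstLetterIndicator (x i) (actB B (g i) ζ) := by
  obtain ⟨N, hN⟩ :=
    PiNat.exists_cylinder_factor (X := Boundary B) Topology.IsInducing.subtypeVal hσ
  let e := (Fintype.equivFin ((Fin N → B × Bool) × (B × Bool))).symm
  refine ⟨_, fun i => cylinderValue σ (List.ofFn (e i).1 ++ [(e i).2]), fun i => (e i).2,
    fun i => (mk (List.ofFn (e i).1))⁻¹, fun ζ => ?_⟩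
  rw [← sum_cylinderValue_mul_firstLetterIndicator hN ζ]
  exact (e.sum_comp _).symm

end DecompPaper

open DecompPaper
theorem coboundaries_generated_by_whitehead_graph_at_identity_general
    (B : Type) [Fintype B] [DecidableEq B]
    (r : ℕ) (w : Fin r → FreeGroup B)
    (σ : Boundary B → ℤ) (hσ : Continuous σ) :
    ∃ (m : ℕ) (c : Fin m → ℤ) (τ : Fin m → Boundary B → ℤ)
      (g : Fin m → FreeGroup B),
      (∀ i, Continuous (τ i)) ∧
      (∀ i, ConstOnComponents B {(1 : FreeGroup B)} (τ i)) ∧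
      ∀ ξ η, IsLine B w ξ η →
        σ η - σ ξ = ∑ i, c i * (τ i (actB B (g i) η) - τ i (actB B (g i) ξ)) := by
  obtain ⟨m, c, x, g, hσ_sum⟩ := exists_eq_sum_firstLetterIndicator_actB hσ
  refine ⟨m, c, fun i => firstLetterIndicator (x i), g, fun i => continuous_firstLetterIndicator _,
    fun i => constOnComponents_firstLetterIndicator _, fun ξ η _ => ?_⟩
  rw [hσ_sum ξ, hσ_sum η, ← Finset.sum_sub_distrib]
  simp only [mul_sub]

/-- Lemma `image`: the submodule `B¹ = d C⁰` of `C¹` is generated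
as a right `ℤ[F]`-module by the coboundaries `dσ` of continuous functions
`σ : ∂F → ℤ` that are constant on `∂C` for every connected component `C` of
`T ∖ {e}`.  (Equalities between elements of `C¹` are evaluated on oriented lines;
`dσ(ξ, η) = σ(η) − σ(ξ)` and `(f · g)(ξ, η) = f(g·ξ, g·η)`.) -/
theorem coboundaries_generated_by_whitehead_graph_at_identity
    (B : Type) [Fintype B] [DecidableEq B] (hB : 2 ≤ Fintype.card B)
    (r : ℕ) (w : Fin r → FreeGroup B) (hw : ∀ i, w i ≠ 1) (hmal : Malnormal B w)
    (σ : Boundary B → ℤ) (hσ : Continuous σ) :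
    ∃ (m : ℕ) (c : Fin m → ℤ) (τ : Fin m → Boundary B → ℤ)
      (g : Fin m → FreeGroup B),
      (∀ i, Continuous (τ i)) ∧
      (∀ i, ConstOnComponents B {(1 : FreeGroup B)} (τ i)) ∧
      ∀ ξ η, IsLine B w ξ η →
        σ η - σ ξ = ∑ i, c i * (τ i (actB B (g i) η) - τ i (actB B (g i) ξ)) :=
  coboundaries_generated_by_whitehead_graph_at_identity_general B r w σ hσ
end
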